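/- If K and L are unconditional convex bodies in R^n, then the set K^{1/2}L^{1/2} = {z : ∃ x ∈ K, y ∈ L, ∀ i, |z_i| = |x_i|^{1/2}|y_i|^{1/2}} is convex and unconditional. -/

import Mathlib

open MeasureTheory Set Pointwise
open scoped InnerProductSpace ENNReal

noncomputable section

/-- `ℝ^n` with the Euclidean structure. -/
abbrev E (n : ℕ) := EuclideanSpace ℝ (Fin n)

/-- The polar body `K° = {y : ∀ x ∈ K, ⟨x,y⟩ ≤ 1}`. -/
def polarBody {n : ℕ} (K : Set (E n)) : Set (E n) := {y | ∀ x ∈ K, ⟪x, y⟫_ℝ ≤ 1}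

/-- A set is unconditional if it is invariant under coordinate-wise sign changes. -/
def Uncond {n : ℕ} (K : Set (E n)) : Prop :=
  ∀ x ∈ K, ∀ ε : Fin n → ℝ, (∀ i, ε i = 1 ∨ ε i = -1) →
    (WithLp.toLp 2 (fun i => ε i * x i) : E n) ∈ K

/-- A convex body: compact, convex, with nonempty interior. -/
def IsConvexBody {n : ℕ} (K : Set (E n)) : Prop :=
  IsCompact K ∧ Convex ℝ K ∧ (interior K).Nonempty

/-- The Steiner symmetral of `K` in direction `u`: over each point of `u^⊥` the fiber
`K_y` is replaced by `(K_y + (-K_y))/2`. -/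
def steiner {n : ℕ} (u : E n) (K : Set (E n)) : Set (E n) :=
  {x | ∃ s t : ℝ, (x - ⟪x, u⟫_ℝ • u + s • u) ∈ K ∧ (x - ⟪x, u⟫_ℝ • u + t • u) ∈ K ∧
    ⟪x, u⟫_ℝ = (s - t) / 2}

/-- The geometric mean body `K^{1/2} L^{1/2}`. -/
def geomMean {n : ℕ} (K L : Set (E n)) : Set (E n) :=
  {z | ∃ x ∈ K, ∃ y ∈ L, ∀ i, |z i| = |x i| ^ ((1 : ℝ) / 2) * |y i| ^ ((1 : ℝ) / 2)}

/-!
Unconditional convex sets are solid: with `x` they contain every `v` with `|v i| ≤ |x i|` for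
all `i`, since each coordinate can be shrunk in turn by averaging with a reflection. Given
`|z i| = √|x i| √|y i|` and `|w i| = √|x' i| √|y' i|`, Cauchy–Schwarz in each coordinate gives
`|(a z + b w) i| ≤ √(X i) √(Y i)` with `X = a|x| + b|x'| ∈ K` and `Y = a|y| + b|y'| ∈ L`;
shrinking `X` and `Y` by a common coordinatewise factor then realises `a z + b w` exactly.
-/

section Unconditional

variable {n : ℕ} {K : Set (E n)}

lemma Uncond.update_mem (hu : Uncond K) (hc : Convex ℝ K) {x : E n} (hx : x ∈ K) (j : Fin n)
    {t : ℝ} (ht : |t| ≤ |x j|) : WithLp.toLp 2 (Function.update (WithLp.ofLp x) j t) ∈ K := by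
  -- The target point lies on the segment from `x` to its reflection `x'` in the `j`-th
  -- coordinate hyperplane.
  set x' : E n := WithLp.toLp 2 fun i => (if i = j then -1 else 1) * x i
  have hx' : x' ∈ K := hu x hx _ fun i => by by_cases h : i = j <;> simp [h]
  set s := t / x j
  have hs : |s| ≤ 1 := by
    rw [abs_div]; exact div_le_one_of_le₀ ht (abs_nonneg _)
  have hst : s * x j = t :=
    div_mul_cancel_of_imp fun h => abs_nonpos_iff.mp (by simpa [h] using ht)
  convert hc hx hx' (a := (1 + s) / 2) (b := (1 - s) / 2) (by linarith [neg_abs_le s])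
    (by linarith [le_abs_self s]) (by ring) using 1
  ext i
  by_cases h : i = j
  · subst h
    simp only [x', Function.update_self, PiLp.add_apply, PiLp.smul_apply, smul_eq_mul, if_pos]
    linear_combination -hst
  · simp only [x', Function.update_of_ne h, PiLp.add_apply, PiLp.smul_apply, smul_eq_mul,
      if_neg h]
    ring

lemma Uncond.mem_of_abs_le (hu : Uncond K) (hc : Convex ℝ K) {x : E n} (hx : x ∈ K) {v : E n}
    (hv : ∀ i, |v i| ≤ |x i|) : v ∈ K := by
  have hmixed : ∀ s : Finset (Fin n), WithLp.toLp 2 (fun i => if i ∈ s then v i else x i) ∈ K := by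
    intro s
    induction s using Finset.induction_on with
    | empty => simpa using hx
    | insert j s hj ih =>
      convert hu.update_mem hc ih j (t := v j) (by simpa [hj] using hv j) using 2
      ext i
      by_cases h : i = j <;> simp [h]
  simpa using hmixed Finset.univ

end Unconditional

lemma Real.sqrt_mul_sqrt_add_sqrt_mul_sqrt_le {p q r s : ℝ} (hp : 0 ≤ p) (hq : 0 ≤ q)
    (hr : 0 ≤ r) (hs : 0 ≤ s) : √p * √q + √r * √s ≤ √(p + r) * √(q + s) := by
  simpa [Fin.sum_univ_two] using
    Real.sum_sqrt_mul_sqrt_le Finset.univ (f := ![p, r]) (g := ![q, s])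
      (by simp [Fin.forall_fin_two, hp, hr]) (by simp [Fin.forall_fin_two, hq, hs])

section GeomMean

variable {n : ℕ} {K L : Set (E n)}

lemma mem_geomMean_iff {z : E n} :
    z ∈ geomMean K L ↔ ∃ x ∈ K, ∃ y ∈ L, ∀ i, |z i| = √|x i| * √|y i| := by
  simp only [Real.sqrt_eq_rpow]
  rfl

lemma mem_geomMean_of_abs_le (hKu : Uncond K) (hKc : Convex ℝ K) (hLu : Uncond L)
    (hLc : Convex ℝ L) {x y z : E n} (hx : x ∈ K) (hy : y ∈ L)
    (hz : ∀ i, |z i| ≤ √|x i| * √|y i|) : z ∈ geomMean K L := by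
  set c : Fin n → ℝ := fun i => |z i| / (√|x i| * √|y i|)
  have hc0 (i : Fin n) : 0 ≤ c i := by positivity
  have hc1 (i : Fin n) : c i ≤ 1 := div_le_one_of_le₀ (hz i) (by positivity)
  have shrink_mem {M : Set (E n)} (hMu : Uncond M) (hMc : Convex ℝ M) {w : E n} (hw : w ∈ M) :
      WithLp.toLp 2 (fun i => c i * w i) ∈ M :=
    hMu.mem_of_abs_le hMc hw fun i => by
      simpa [abs_mul, abs_of_nonneg (hc0 i)] using
        mul_le_of_le_one_left (abs_nonneg (w i)) (hc1 i)
  refine mem_geomMean_iff.mpr ⟨_, shrink_mem hKu hKc hx, _, shrink_mem hLu hLc hy, fun i => ?_⟩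
  have hzc : c i * (√|x i| * √|y i|) = |z i| :=
    div_mul_cancel_of_imp fun h => le_antisymm ((hz i).trans_eq h) (abs_nonneg _)
  clear_value c
  simp only [abs_mul, abs_of_nonneg (hc0 i), Real.sqrt_mul (hc0 i)]
  rw [← hzc]
  linear_combination -(√|x i| * √|y i|) * Real.mul_self_sqrt (hc0 i)

theorem convex_geomMean (hKu : Uncond K) (hKc : Convex ℝ K) (hLu : Uncond L)
    (hLc : Convex ℝ L) : Convex ℝ (geomMean K L) := by
  intro z hz w hw a b ha hb hab
  obtain ⟨x, hx, y, hy, hzxy⟩ := mem_geomMean_iff.mp hz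
  obtain ⟨x', hx', y', hy', hwxy⟩ := mem_geomMean_iff.mp hw
  have abs_mem {M : Set (E n)} (hMu : Uncond M) (hMc : Convex ℝ M) {v : E n} (hv : v ∈ M) :
      WithLp.toLp 2 (fun i => |v i|) ∈ M :=
    hMu.mem_of_abs_le hMc hv fun i => (abs_abs (v i)).le
  have hX := hKc (abs_mem hKu hKc hx) (abs_mem hKu hKc hx') ha hb hab
  have hY := hLc (abs_mem hLu hLc hy) (abs_mem hLu hLc hy') ha hb hab
  refine mem_geomMean_of_abs_le hKu hKc hLu hLc hX hY fun i => ?_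
  have hsa : √a * √a = a := Real.mul_self_sqrt ha
  have hsb : √b * √b = b := Real.mul_self_sqrt hb
  calc |(a • z + b • w) i| ≤ a * |z i| + b * |w i| := by
        simpa [abs_mul, abs_of_nonneg ha, abs_of_nonneg hb] using abs_add_le (a * z i) (b * w i)
    _ = √(a * |x i|) * √(a * |y i|) + √(b * |x' i|) * √(b * |y' i|) := by
        simp only [hzxy, hwxy, Real.sqrt_mul ha, Real.sqrt_mul hb]
        linear_combination -(√|x i| * √|y i|) * hsa - (√|x' i| * √|y' i|) * hsb
    _ ≤ √(a * |x i| + b * |x' i|) * √(a * |y i| + b * |y' i|) :=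
        Real.sqrt_mul_sqrt_add_sqrt_mul_sqrt_le (by positivity) (by positivity) (by positivity)
          (by positivity)
    _ = _ := by
        simp only [PiLp.add_apply, PiLp.smul_apply, smul_eq_mul]
        rw [abs_of_nonneg (a := a * |x i| + b * |x' i|) (by positivity),
          abs_of_nonneg (a := a * |y i| + b * |y' i|) (by positivity)]

theorem uncond_geomMean : Uncond (geomMean K L) := by
  rintro z ⟨x, hx, y, hy, hz⟩ ε hε
  refine ⟨x, hx, y, hy, fun i => ?_⟩
  rcases hε i with h | h <;> simp [h, hz i]

end GeomMean

theorem blaschke_santalo_stmt (n : ℕ) (K L : Set (E n))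
    (hK : IsConvexBody K) (hL : IsConvexBody L) (hKu : Uncond K) (hLu : Uncond L) :
    Convex ℝ (geomMean K L) ∧ Uncond (geomMean K L) :=
  ⟨convex_geomMean hKu hK.2.1 hLu hL.2.1, uncond_geomMean⟩
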